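/- Let K be a complete non-archimedean valued field. A continuous linear operator T : c₀ → c₀ admits an adjoint with respect to ⟨x,y⟩ = Σ x_i y_i if and only if for every y ∈ c₀, lim_{i→∞} ⟨T e_i, y⟩ = 0. -/

import Mathlib

open Filter Topology

noncomputable section

/-- `c₀(ℕ, K)`: the space of `K`-valued null sequences (zero-at-infinity functions on
discrete `ℕ`), with the supremum norm. -/
abbrev Cz (K : Type) [NontriviallyNormedField K] := ZeroAtInftyContinuousMap ℕ K

/-- The canonical bilinear form `⟨x, y⟩ = ∑ᵢ xᵢ yᵢ` on `c₀`. -/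
def pr {K : Type} [NontriviallyNormedField K] (x y : Cz K) : K := ∑' i, x i * y i

/-- The canonical basis vector `eᵢ` of `c₀`. -/
def e (K : Type) [NontriviallyNormedField K] (i : ℕ) : Cz K where
  toFun := fun j => if j = i then (1 : K) else 0
  continuous_toFun := continuous_of_discreteTopology
  zero_at_infty' := by
    rw [cocompact_eq_atTop (α := ℕ)]
    apply tendsto_nhds_of_eventually_eq
    filter_upwards [eventually_gt_atTop i] with j hj
    simp [hj.ne']

/-- A continuous linear operator on `c₀` is compact iff it is a uniform limit of
finite-rank continuous operators (equivalently, it maps the unit ball to a compactoid). -/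
def IsCompactOp {K : Type} [NontriviallyNormedField K] (T : Cz K →L[K] Cz K) : Prop :=
  ∀ ε : ℝ, 0 < ε → ∃ S : Cz K →L[K] Cz K,
    Module.Finite K (LinearMap.range (S : Cz K →ₗ[K] Cz K)) ∧ ‖T - S‖ ≤ ε

/-- The closed unit ball of a non-archimedean valued field, as a subring
(the valuation ring). -/
def valRing {K : Type} [NontriviallyNormedField K]
    (hna : IsNonarchimedean (norm : K → ℝ)) : Subring K where
  carrier := {x : K | ‖x‖ ≤ 1}
  mul_mem' := fun {a b} ha hb => by
    simp only [Set.mem_setOf_eq] at *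
    rw [norm_mul]
    nlinarith [norm_nonneg a, norm_nonneg b]
  one_mem' := by simp
  add_mem' := fun {a b} ha hb => by
    simp only [Set.mem_setOf_eq] at *
    exact (hna a b).trans (max_le ha hb)
  zero_mem' := by simp
  neg_mem' := fun {a} ha => by simpa using ha

/-- The maximal ideal (open unit ball) of the valuation ring. -/
def valIdeal {K : Type} [NontriviallyNormedField K]
    (hna : IsNonarchimedean (norm : K → ℝ)) : Ideal (valRing hna) where
  carrier := {x | ‖(x : K)‖ < 1}
  add_mem' := fun {a b} ha hb => by
    simp only [Set.mem_setOf_eq] at *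
    push_cast
    exact ((hna a b)).trans_lt (max_lt ha hb)
  zero_mem' := by simp
  smul_mem' := fun c x hx => by
    simp only [Set.mem_setOf_eq, smul_eq_mul] at *
    push_cast
    rw [norm_mul]
    calc ‖(c : K)‖ * ‖(x : K)‖ ≤ 1 * ‖(x : K)‖ := by
          exact mul_le_mul_of_nonneg_right c.2 (norm_nonneg _)
      _ = ‖(x : K)‖ := one_mul _
      _ < 1 := hx

/-- The residue class field of a non-archimedean valued field. -/
abbrev Residue {K : Type} [NontriviallyNormedField K]
    (hna : IsNonarchimedean (norm : K → ℝ)) : Type :=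
  valRing hna ⧸ valIdeal hna

/-- A commutative ring is formally real if `-1` is not a sum of squares. -/
def FormallyRealRing (R : Type) [CommRing R] : Prop :=
  ¬ ∃ (n : ℕ) (a : Fin n → R), (∑ i, a i ^ 2) = -1

/-!
Every `x ∈ c₀` is the unconditional sum `∑ xᵢ eᵢ`, so a continuous functional `φ` satisfies
`φ x = ∑ xᵢ φ(eᵢ)`. If an adjoint `S` exists, then `⟨T eᵢ, z⟩ = (S z)ᵢ`, a null sequence.
Conversely, if `i ↦ ⟨T eᵢ, z⟩` is null for every `z`, it defines `S z ∈ c₀`, and applying the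
expansion to `φ = ⟨T ·, z⟩` gives `⟨T x, z⟩ = ∑ xᵢ (S z)ᵢ = ⟨x, S z⟩`. Over a non-archimedean
field the form is bounded, `‖⟨x, y⟩‖ ≤ ‖x‖ ‖y‖`, which makes `φ` and `S` continuous.
-/

namespace Cz

section NormedField

variable {K : Type} [NontriviallyNormedField K]

theorem norm_apply_le (x : Cz K) (i : ℕ) : ‖x i‖ ≤ ‖x‖ :=
  calc ‖x i‖ = ‖x.toBCF i‖ := rfl
    _ ≤ ‖x.toBCF‖ := x.toBCF.norm_coe_le_norm i
    _ = ‖x‖ := ZeroAtInftyContinuousMap.norm_toBCF_eq_norm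

theorem norm_le_of_forall_le (x : Cz K) {C : ℝ} (hC : 0 ≤ C) (h : ∀ i, ‖x i‖ ≤ C) :
    ‖x‖ ≤ C := by
  rw [← ZeroAtInftyContinuousMap.norm_toBCF_eq_norm]
  exact (BoundedContinuousFunction.norm_le hC).2 h

theorem tendsto_apply_atTop (x : Cz K) : Tendsto (⇑x) atTop (𝓝 0) := by
  simpa only [cocompact_eq_atTop] using zero_at_infty x

def ofTendsto (f : ℕ → K) (hf : Tendsto f atTop (𝓝 0)) : Cz K where
  toFun := f
  continuous_toFun := continuous_of_discreteTopology
  zero_at_infty' := by rwa [cocompact_eq_atTop]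

@[simp]
theorem ofTendsto_apply (f : ℕ → K) (hf : Tendsto f atTop (𝓝 0)) (i : ℕ) :
    ofTendsto f hf i = f i := rfl

theorem e_apply (i j : ℕ) : e K i j = if j = i then 1 else 0 := rfl

theorem norm_e_le (i : ℕ) : ‖e K i‖ ≤ 1 :=
  norm_le_of_forall_le _ zero_le_one fun j => by
    rw [e_apply]
    split_ifs <;> simp

theorem sum_smul_e_apply (x : Cz K) (s : Finset ℕ) (j : ℕ) :
    (∑ i ∈ s, x i • e K i) j = if j ∈ s then x j else 0 := by
  have := map_sum (AddMonoidHom.mk' (fun y : Cz K => y j) fun _ _ => rfl) (fun i => x i • e K i) s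
  simp only [AddMonoidHom.mk'_apply] at this
  rw [this]
  simp [e_apply]

theorem hasSum_smul_e (x : Cz K) : HasSum (fun i => x i • e K i) x := by
  rw [HasSum, Metric.tendsto_nhds]
  intro ε hε
  obtain ⟨N, hN⟩ :=
    eventually_atTop.mp (NormedAddGroup.tendsto_nhds_zero.mp (tendsto_apply_atTop x) (ε / 2)
      (half_pos hε))
  filter_upwards [eventually_ge_atTop (Finset.range N)] with s hs
  rw [dist_eq_norm]
  refine (norm_le_of_forall_le _ (half_pos hε).le fun j => ?_).trans_lt (half_lt_self hε)
  rw [ZeroAtInftyContinuousMap.sub_apply, sum_smul_e_apply]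
  split_ifs with hj
  · simpa using (half_pos hε).le
  · have hNj : N ≤ j := not_lt.mp fun hjN => hj (hs (Finset.mem_range.mpr hjN))
    simpa using (hN j hNj).le

theorem hasSum_mul_apply_e (φ : Cz K →L[K] K) (x : Cz K) :
    HasSum (fun i => x i * φ (e K i)) (φ x) := by
  simpa using (hasSum_smul_e x).mapL φ

theorem pr_e_left (i : ℕ) (y : Cz K) : pr (e K i) y = y i := by
  rw [pr, tsum_eq_single i fun j hj => by simp [e_apply, hj]]
  simp [e_apply]

def ofFunctionals (ψ : ℕ → Cz K →L[K] K) (C : ℝ) (hψ : ∀ i, ‖ψ i‖ ≤ C)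
    (htends : ∀ z, Tendsto (fun i => ψ i z) atTop (𝓝 0)) : Cz K →L[K] Cz K :=
  LinearMap.mkContinuous
    { toFun := fun z => ofTendsto _ (htends z)
      map_add' := fun z w => by ext i; simp
      map_smul' := fun c z => by ext i; simp }
    C fun z =>
      norm_le_of_forall_le _ (mul_nonneg ((norm_nonneg (ψ 0)).trans (hψ 0)) (norm_nonneg z))
        fun i => ((ψ i).le_opNorm z).trans (mul_le_mul_of_nonneg_right (hψ i) (norm_nonneg z))

theorem pr_comm (x y : Cz K) : pr x y = pr y x := by
  simp only [pr, mul_comm]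

theorem pr_smul_left (c : K) (x y : Cz K) : pr (c • x) y = c * pr x y := by
  simp only [pr, ZeroAtInftyContinuousMap.smul_apply, smul_eq_mul, mul_assoc, tsum_mul_left]

end NormedField

section Nonarchimedean

variable {K : Type} [NontriviallyNormedField K] [CompleteSpace K]

theorem summable_mul_apply (hna : IsNonarchimedean (norm : K → ℝ)) (x y : Cz K) :
    Summable fun i => x i * y i := by
  have := IsUltrametricDist.isUltrametricDist_of_isNonarchimedean_norm hna
  apply NonarchimedeanAddGroup.summable_of_tendsto_cofinite_zero
  rw [Nat.cofinite_eq_atTop, tendsto_zero_iff_norm_tendsto_zero]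
  refine squeeze_zero (fun i => norm_nonneg _) (fun i => ?_)
    (by simpa using (tendsto_zero_iff_norm_tendsto_zero.mp (tendsto_apply_atTop x)).mul_const ‖y‖)
  rw [norm_mul]
  exact mul_le_mul_of_nonneg_left (norm_apply_le y i) (norm_nonneg _)

theorem norm_pr_le (hna : IsNonarchimedean (norm : K → ℝ)) (x y : Cz K) :
    ‖pr x y‖ ≤ ‖x‖ * ‖y‖ := by
  have := IsUltrametricDist.isUltrametricDist_of_isNonarchimedean_norm hna
  refine le_of_tendsto (summable_mul_apply hna x y).hasSum.norm (.of_forall fun s => ?_)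
  refine IsUltrametricDist.norm_sum_le_of_forall_le_of_nonneg (by positivity) fun i _ => ?_
  rw [norm_mul]
  exact mul_le_mul (norm_apply_le x i) (norm_apply_le y i) (norm_nonneg _) (norm_nonneg _)

theorem pr_add_left (hna : IsNonarchimedean (norm : K → ℝ)) (x y z : Cz K) :
    pr (x + y) z = pr x z + pr y z := by
  simp only [pr, ZeroAtInftyContinuousMap.add_apply, add_mul]
  exact (summable_mul_apply hna x z).tsum_add (summable_mul_apply hna y z)

def prL (hna : IsNonarchimedean (norm : K → ℝ)) : Cz K →L[K] Cz K →L[K] K :=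
  LinearMap.mkContinuous₂
    (LinearMap.mk₂ K pr (pr_add_left hna) pr_smul_left
      (fun x y z => by rw [pr_comm, pr_add_left hna, pr_comm y, pr_comm z])
      (fun c x y => by rw [pr_comm, pr_smul_left, pr_comm, smul_eq_mul]))
    1 fun x y => by rw [one_mul]; exact norm_pr_le hna x y

@[simp]
theorem prL_apply (hna : IsNonarchimedean (norm : K → ℝ)) (x y : Cz K) :
    prL hna x y = pr x y := rfl

end Nonarchimedean

end Cz

open Cz

theorem stmt3_general {K : Type} [NontriviallyNormedField K] [CompleteSpace K]
    (hna : IsNonarchimedean (norm : K → ℝ))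
    (T : Cz K →L[K] Cz K) :
    (∃ S : Cz K →L[K] Cz K, ∀ x z : Cz K, pr (T x) z = pr x (S z)) ↔
      (∀ z : Cz K, Tendsto (fun i => pr (T (e K i)) z) atTop (𝓝 0)) := by
  constructor
  · rintro ⟨S, hS⟩ z
    simpa only [hS, pr_e_left] using tendsto_apply_atTop (S z)
  · intro htends
    have hbound (i : ℕ) : ‖prL hna (T (e K i))‖ ≤ ‖T‖ :=
      (prL hna (T (e K i))).opNorm_le_bound (norm_nonneg T) fun z =>
        (norm_pr_le hna _ z).trans (by gcongr; simpa using T.le_opNorm_of_le (norm_e_le i))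
    refine ⟨ofFunctionals (fun i => prL hna (T (e K i))) ‖T‖ hbound htends, fun x z => ?_⟩
    calc pr (T x) z = ∑' i, x i * pr (T (e K i)) z := by
          simpa using ((hasSum_mul_apply_e ((prL hna).flip z ∘L T) x).tsum_eq).symm
      _ = pr x _ := rfl

theorem stmt3 {K : Type} [NontriviallyNormedField K] [CompleteSpace K]
    (hna : IsNonarchimedean (norm : K → ℝ))
    (hres : FormallyRealRing (Residue hna))
    (T : Cz K →L[K] Cz K) :
    (∃ S : Cz K →L[K] Cz K, ∀ x z : Cz K, pr (T x) z = pr x (S z)) ↔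
      (∀ z : Cz K, Tendsto (fun i => pr (T (e K i)) z) atTop (𝓝 0)) :=
  stmt3_general hna T
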